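/- Let k be a commutative noetherian ring of finite global dimension d, and let G be a finite group. If a kG-module M (possibly infinitely generated) has finite projective dimension over kG, then its projective dimension over kG is at most d. -/

import Mathlib

/-!
Background definitions.

Throughout, for a commutative ring `k` and a group `G`, the group algebra `kG` is
`MonoidAlgebra k G`, and `kG`-modules are (possibly infinitely generated) modules over
`MonoidAlgebra k G`.
-/

universe u v

open scoped TensorProduct DirectSum

/-- `M` has projective dimension at most `n` over `R` (i.e. it admits a projective
resolution of length at most `n`). -/
def HasProjDimLE (R : Type u) [Ring R] :
    (n : ℕ) → (M : Type v) → [AddCommMonoid M] → [Module R M] → Prop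
  | 0, M, _, _ => Module.Projective R M
  | n + 1, M, _, _ =>
    ∃ (P : Type v) (_ : AddCommMonoid P) (_ : Module R P) (f : P →ₗ[R] M),
      Module.Projective R P ∧ Function.Surjective f ∧
        HasProjDimLE R n (LinearMap.ker f)

/-- `M` has finite projective dimension over `R`. -/
def HasFinProjDim (R : Type u) [Ring R] (M : Type v) [AddCommMonoid M] [Module R M] : Prop :=
  ∃ n, HasProjDimLE R n M

/-- The global dimension of `R` is at most `d` : every `R`-module has projective dimension
at most `d`. -/
def GlobalDimLE (R : Type u) [Ring R] (d : ℕ) : Prop :=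
  ∀ (M : Type u) (_ : AddCommMonoid M) (_ : Module R M), HasProjDimLE R d M

section GroupAlgebra

variable (k : Type u) [CommRing k] (G : Type u) [Group G]

/-- The canonical ring homomorphism `kF → kG` induced by the inclusion of a subgroup `F ≤ G`. -/
noncomputable def subgroupInclusion (F : Subgroup G) :
    MonoidAlgebra k F →+* MonoidAlgebra k G :=
  MonoidAlgebra.mapDomainRingHom k F.subtype

/-- The restriction of a `kG`-module `M` to a `kF`-module, for a subgroup `F ≤ G`. -/
noncomputable def restrictToSubgroup (F : Subgroup G) (M : Type u) [AddCommMonoid M]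
    [Module (MonoidAlgebra k G) M] : Module (MonoidAlgebra k F) M :=
  Module.compHom M (subgroupInclusion k G F)

/-- A group `G` is of type `Φ_k` if a `kG`-module has finite projective dimension over `kG`
if and only if its restriction to every finite subgroup `F ≤ G` has finite projective
dimension over `kF`. -/
def IsTypePhi : Prop :=
  ∀ (M : Type u) (_ : AddCommMonoid M) (_ : Module (MonoidAlgebra k G) M),
    HasFinProjDim (MonoidAlgebra k G) M ↔
      ∀ (F : Subgroup G), Finite F →
        letI := restrictToSubgroup k G F M
        HasFinProjDim (MonoidAlgebra k F) M

/-- The finitistic dimension of `kG` is at most `b` : every `kG`-module of finite projective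
dimension has projective dimension at most `b`. -/
def FindimLE (b : ℕ) : Prop :=
  ∀ (M : Type u) (_ : AddCommMonoid M) (_ : Module (MonoidAlgebra k G) M),
    HasFinProjDim (MonoidAlgebra k G) M → HasProjDimLE (MonoidAlgebra k G) b M

/-- The trivial representation of `G` on `k`. -/
noncomputable abbrev trivRep : Representation k G k :=
  Representation.trivial k (G := G) (V := k)

/-- The trivial `kG`-module `k`. -/
noncomputable abbrev Triv : Type u := (trivRep k G).asModule

/-- `kG ⊗_{kH} k`, the module induced from the trivial `kH`-module `k`, realised as the
quotient of `kG` by the left submodule generated by `{h - 1 : h ∈ H}`, i.e. by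
`kG · I_H` where `I_H` is the augmentation ideal of `kH`. -/
noncomputable def IndTriv (H : Subgroup G) : Type u :=
  MonoidAlgebra k G ⧸ Submodule.span (MonoidAlgebra k G)
    {x : MonoidAlgebra k G | ∃ h ∈ H, x = MonoidAlgebra.of k G h - 1}

noncomputable instance (H : Subgroup G) : AddCommGroup (IndTriv k G H) :=
  inferInstanceAs (AddCommGroup (MonoidAlgebra k G ⧸ _))

noncomputable instance (H : Subgroup G) : Module (MonoidAlgebra k G) (IndTriv k G H) :=
  inferInstanceAs (Module (MonoidAlgebra k G) (MonoidAlgebra k G ⧸ _))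

/-- The restriction of the `kG`-module `M` to the subgroup `H ≤ G` is projective over `kH`. -/
noncomputable def RestrictionProjective (H : Subgroup G) (M : Type u) [AddCommMonoid M]
    [Module (MonoidAlgebra k G) M] : Prop :=
  letI := restrictToSubgroup k G H M
  Module.Projective (MonoidAlgebra k H) M

/-- `M` is a `kG`-lattice, i.e. `M` is projective as a `k`-module (where the `k`-module
structure is obtained by restricting scalars along `k → kG`). -/
noncomputable def IsLatticeModule (M : Type u) [AddCommMonoid M]
    [Module (MonoidAlgebra k G) M] : Prop :=
  letI : Module k M := Module.compHom M (algebraMap k (MonoidAlgebra k G))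
  Module.Projective k M

/-- `kG`, viewed as a left `kH`-module via left multiplication, for a subgroup `H ≤ G`. -/
noncomputable instance (H : Subgroup G) : Module (MonoidAlgebra k H) (MonoidAlgebra k G) :=
  Module.compHom _ (subgroupInclusion k G H)

/-- Right multiplication by `a : kG` as a `kH`-linear endomorphism of `kG`. -/
noncomputable def rightMulHom (H : Subgroup G) (a : MonoidAlgebra k G) :
    MonoidAlgebra k G →ₗ[MonoidAlgebra k H] MonoidAlgebra k G where
  toFun x := x * a
  map_add' x y := add_mul x y a
  map_smul' b x := by
    show (subgroupInclusion k G H b * x) * a = subgroupInclusion k G H b * (x * a)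
    rw [mul_assoc]

/-- The `kG`-module structure on the coinduced module `Coind^G_H N = Hom_{kH}(kG, N)`
(where `kG` is a left `kH`-module via left multiplication), given by `(a • φ) x = φ (x * a)`;
for `a = g ∈ G` this is `(g • φ) x = φ (x * g)`. -/
noncomputable instance coindModule (H : Subgroup G) (N : Type u) [AddCommGroup N]
    [Module (MonoidAlgebra k H) N] :
    Module (MonoidAlgebra k G) (MonoidAlgebra k G →ₗ[MonoidAlgebra k H] N) where
  smul a φ := LinearMap.comp φ (rightMulHom k G H a)
  one_smul φ := LinearMap.ext fun x => by
    show φ (x * 1) = φ x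
    rw [mul_one]
  mul_smul a b φ := LinearMap.ext fun x => by
    show φ (x * (a * b)) = φ ((x * a) * b)
    rw [mul_assoc]
  smul_zero a := LinearMap.ext fun x => rfl
  smul_add a φ ψ := LinearMap.ext fun x => rfl
  add_smul a b φ := LinearMap.ext fun x => by
    show φ (x * (a + b)) = φ (x * a) + φ (x * b)
    rw [mul_add, map_add]
  zero_smul φ := LinearMap.ext fun x => by
    show φ (x * 0) = 0
    rw [mul_zero, map_zero]

/-- The representation of `G` on the `k`-module of all functions `G → Y`, with
`(g • φ) x = φ (x * g)`; this is the module coinduced from the trivial subgroup,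
`Coind^G_1 Y = Hom_k(kG, Y)`. -/
noncomputable def coindTrivRep (Y : Type u) [AddCommGroup Y] [Module k Y] :
    Representation k G (G → Y) where
  toFun g :=
    { toFun := fun φ x => φ (x * g)
      map_add' := fun φ ψ => rfl
      map_smul' := fun r φ => rfl }
  map_one' := by ext φ x; simp
  map_mul' g h := by ext φ x; simp [mul_assoc]

end GroupAlgebra

/-- `C` is a direct summand of `S` as an `R`-module. -/
def IsSummandOf (R : Type u) [Ring R] (C : Type v) (S : Type v) [AddCommMonoid C] [Module R C]
    [AddCommMonoid S] [Module R S] : Prop :=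
  ∃ (i : C →ₗ[R] S) (p : S →ₗ[R] C), p.comp i = LinearMap.id

/-- An `R`-module is Gorenstein projective if it is (isomorphic to) a kernel of a
differential in a totally acyclic `ℤ`-indexed chain complex of projective `R`-modules,
i.e. an everywhere-exact complex `P_*` of projectives such that `Hom_R(P_*, Q)` is
everywhere exact for every projective `R`-module `Q`. -/
def IsGorensteinProjective (R : Type u) [Ring R] (M : Type u) [AddCommMonoid M]
    [Module R M] : Prop :=
  ∃ (P : ℤ → Type u) (_ : ∀ i, AddCommMonoid (P i)) (_ : ∀ i, Module R (P i))
    (d : ∀ i : ℤ, P (i + 1) →ₗ[R] P i),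
      (∀ i, Module.Projective R (P i)) ∧
      (∀ i : ℤ, Function.Exact (d (i + 1)) (d i)) ∧
      (∀ (Q : Type u) (_ : AddCommMonoid Q) (_ : Module R Q), Module.Projective R Q →
        ∀ i : ℤ, Function.Exact (fun f : P i →ₗ[R] Q => f.comp (d i))
          (fun f : P (i + 1) →ₗ[R] Q => f.comp (d (i + 1)))) ∧
      ∃ i : ℤ, Nonempty (M ≃ₗ[R] LinearMap.ker (d i))

/-- `A` is an `n`-th syzygy of `M` : there is an exact sequence
`0 → A → P_{n-1} → ⋯ → P_0 → M → 0` with all `P_i` projective (for `n = 0` read `A ≅ M`). -/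
def IsSyzygy (R : Type u) [Ring R] :
    (n : ℕ) → (A : Type u) → [AddCommMonoid A] → [Module R A] →
      (M : Type u) → [AddCommMonoid M] → [Module R M] → Prop
  | 0, A, _, _, M, _, _ => Nonempty (A ≃ₗ[R] M)
  | n + 1, A, _, _, M, _, _ =>
    ∃ (P : Type u) (_ : AddCommMonoid P) (_ : Module R P) (f : P →ₗ[R] M),
      Module.Projective R P ∧ Function.Surjective f ∧ IsSyzygy R n A (LinearMap.ker f)

/-- Two `R`-modules `M` and `N` are stably isomorphic : for some `n ≥ 0` there are `n`-th
syzygies `A` of `M` and `B` of `N`, and projective modules `P`, `Q`, with `A ⊕ P ≅ B ⊕ Q`. -/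
def StablyIsomorphic (R : Type u) [Ring R] (M : Type u) [AddCommMonoid M] [Module R M]
    (N : Type u) [AddCommMonoid N] [Module R N] : Prop :=
  ∃ (n : ℕ) (A B : Type u) (_ : AddCommMonoid A) (_ : Module R A)
    (_ : AddCommMonoid B) (_ : Module R B),
      IsSyzygy R n A M ∧ IsSyzygy R n B N ∧
      ∃ (P Q : Type u) (_ : AddCommMonoid P) (_ : Module R P) (_ : AddCommMonoid Q)
        (_ : Module R Q), Module.Projective R P ∧ Module.Projective R Q ∧
          Nonempty ((A × P) ≃ₗ[R] (B × Q))

/-- A homomorphism `f : A → B` of `R`-modules is a stable isomorphism : there are a projective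
module `P` and a surjection `π : P → B` such that the kernel of the combined map
`(f, π) : A ⊕ P → B` has finite projective dimension. -/
def IsStableIso (R : Type u) [Ring R] {A B : Type u} [AddCommMonoid A] [Module R A]
    [AddCommMonoid B] [Module R B] (f : A →ₗ[R] B) : Prop :=
  ∃ (P : Type u) (_ : AddCommMonoid P) (_ : Module R P) (π : P →ₗ[R] B),
    Module.Projective R P ∧ Function.Surjective π ∧
      HasFinProjDim R (LinearMap.ker (LinearMap.coprod f π))

section Equivariant

variable {k G V W : Type u} [CommRing k] [Group G]
  [AddCommGroup V] [Module k V] [AddCommGroup W] [Module k W]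

/-- A `G`-equivariant `k`-linear map between representations induces a homomorphism of the
corresponding modules over the group algebra `MonoidAlgebra k G`. -/
noncomputable def eqvToModule (ρ : Representation k G V) (σ : Representation k G W)
    (f : V →ₗ[k] W) (hf : ∀ (g : G) (v : V), f (ρ g v) = σ g (f v)) :
    ρ.asModule →ₗ[MonoidAlgebra k G] σ.asModule where
  toFun v := f v
  map_add' := f.map_add
  map_smul' a v := by
    show f (ρ.asAlgebraHom a v) = σ.asAlgebraHom a (f v)
    induction a using MonoidAlgebra.induction_on with
    | of g => simp [Representation.asAlgebraHom_of, hf]; exact hf g v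
    | add a b ha hb =>
      simp only [map_add]
      erw [LinearMap.add_apply]
      simp only [map_add, ha, hb]
      rfl
    | smul r a ha =>
      simp only [map_smul]
      erw [LinearMap.smul_apply]
      simp only [map_smul, ha]
      rfl

theorem eval_equivariant (ρ : Representation k G V) (g : G) (v : V) :
    Module.Dual.eval k V (ρ g v) = ρ.dual.dual g (Module.Dual.eval k V v) := by
  ext φ
  simp [Representation.dual_apply, Module.Dual.transpose_apply]

/-- The natural map `M → M**` as a homomorphism of `kG`-modules. -/
noncomputable def evalHomG (ρ : Representation k G V) :
    ρ.asModule →ₗ[MonoidAlgebra k G] ρ.dual.dual.asModule :=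
  eqvToModule ρ ρ.dual.dual (Module.Dual.eval k V) (eval_equivariant ρ)

theorem ev_equivariant (ρ : Representation k G V) (g : G) (z : V ⊗[k] Module.Dual k V) :
    contractRight k V ((ρ.tprod ρ.dual) g z) =
      trivRep k G g (contractRight k V z) := by
  induction z using TensorProduct.induction_on with
  | zero => simp
  | tmul m φ =>
      simp [Representation.tprod_apply, contractRight_apply,
        Representation.dual_apply, Module.Dual.transpose_apply, Representation.trivial_apply,
        ← Module.End.mul_apply, ← map_mul]
  | add x y hx hy => simp only [map_add, hx, hy]

/-- The evaluation map `ev : M ⊗_k M* → k`, `m ⊗ φ ↦ φ m`, as a homomorphism of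
`kG`-modules (where `M ⊗_k M*` carries the diagonal `G`-action and `k` is trivial). -/
noncomputable def evHomG (ρ : Representation k G V) :
    (ρ.tprod ρ.dual).asModule →ₗ[MonoidAlgebra k G] Triv k G where
  toFun z := contractRight k V z
  map_add' := (contractRight k V).map_add
  map_smul' a z := by
    show contractRight k V ((ρ.tprod ρ.dual).asAlgebraHom a z) =
      (trivRep k G).asAlgebraHom a (contractRight k V z)
    induction a using MonoidAlgebra.induction_on with
    | of g => simpa [Representation.asAlgebraHom_of] using ev_equivariant ρ g z
    | add a b ha hb =>
      simp only [map_add]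
      erw [LinearMap.add_apply]
      simp only [map_add, ha, hb]
      rfl
    | smul r a ha =>
      simp only [map_smul]
      erw [LinearMap.smul_apply]
      simp only [map_smul, ha]
      rfl

theorem theta_equivariant (ρ : Representation k G V) (g : G) (z : V ⊗[k] Module.Dual k V) :
    ((dualTensorHom k V V).comp (TensorProduct.comm k V (Module.Dual k V)).toLinearMap)
        ((ρ.tprod ρ.dual) g z) =
      (ρ.linHom ρ) g (((dualTensorHom k V V).comp
        (TensorProduct.comm k V (Module.Dual k V)).toLinearMap) z) := by
  induction z using TensorProduct.induction_on with
  | zero => simp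
  | tmul m φ =>
      ext m'
      simp [Representation.tprod_apply, dualTensorHom_apply,
        Representation.dual_apply, Module.Dual.transpose_apply]
  | add x y hx hy => simp only [map_add, hx, hy]

/-- The natural map `θ_M : M ⊗_k M* → End_k M`, `θ (m ⊗ φ) m' = φ m' • m`, as a
homomorphism of `kG`-modules (where `End_k M` carries the conjugation `G`-action). -/
noncomputable def thetaHomG (ρ : Representation k G V) :
    (ρ.tprod ρ.dual).asModule →ₗ[MonoidAlgebra k G] (ρ.linHom ρ).asModule where
  toFun z := ((dualTensorHom k V V).comp
    (TensorProduct.comm k V (Module.Dual k V)).toLinearMap) z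
  map_add' x y := map_add _ x y
  map_smul' a z := by
    show ((dualTensorHom k V V).comp (TensorProduct.comm k V (Module.Dual k V)).toLinearMap)
        ((ρ.tprod ρ.dual).asAlgebraHom a z) =
      (ρ.linHom ρ).asAlgebraHom a (((dualTensorHom k V V).comp
        (TensorProduct.comm k V (Module.Dual k V)).toLinearMap) z)
    induction a using MonoidAlgebra.induction_on with
    | of g => simpa [Representation.asAlgebraHom_of] using theta_equivariant ρ g z
    | add a b ha hb =>
      simp only [map_add]
      erw [LinearMap.add_apply]
      simp only [map_add, ha, hb]
      rfl
    | smul r a ha =>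
      simp only [map_smul]
      erw [LinearMap.smul_apply]
      simp only [map_smul, ha]
      rfl

/-- A representation is invertible (endotrivial) if there is a `kG`-module `N` such that
`M ⊗_k N` (with the diagonal `G`-action) is stably isomorphic to the trivial module `k`. -/
def IsInvertibleRep (ρ : Representation k G V) : Prop :=
  ∃ (W' : Type u) (_ : AddCommMonoid W') (_ : Module k W') (σ : Representation k G W'),
    StablyIsomorphic (MonoidAlgebra k G) (ρ.tprod σ).asModule (Triv k G)

end Equivariant

section MapCoeff

variable (k : Type u) [CommRing k] (l : Type u) [CommRing l] (G : Type u) [Group G]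

/-- The ring homomorphism `kG → ℓG` induced by a ring homomorphism `f : k → ℓ`
(applying `f` to the coefficients). -/
noncomputable def mapCoeffRingHom (f : k →+* l) :
    MonoidAlgebra k G →+* MonoidAlgebra l G :=
  letI : Algebra k l := f.toAlgebra
  ((MonoidAlgebra.lift k (MonoidAlgebra l G) G) (MonoidAlgebra.of l G)).toRingHom

end MapCoeff

section BaseChange

variable {k : Type u} [CommRing k] {G : Type u} [Group G]
  {V : Type u} [AddCommGroup V] [Module k V]
  (A : Type u) [CommRing A] [Algebra k A]

/-- The base change `A ⊗_k V` of a representation along `k → A`. -/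
noncomputable def repBaseChange (ρ : Representation k G V) :
    Representation A G (A ⊗[k] V) where
  toFun g := LinearMap.baseChange A (ρ g)
  map_one' := by ext; simp
  map_mul' g h := by ext; simp

end BaseChange

section Generic
variable {R : Type u} [Ring R]

theorem hpdle_zero_iff {M : Type v} [AddCommMonoid M] [Module R M] :
    HasProjDimLE R 0 M ↔ Module.Projective R M := Iff.rfl

theorem hpdle_succ_iff {n : ℕ} {M : Type v} [AddCommMonoid M] [Module R M] :
    HasProjDimLE R (n+1) M ↔
    ∃ (P : Type v) (_ : AddCommMonoid P) (_ : Module R P) (f : P →ₗ[R] M),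
      Module.Projective R P ∧ Function.Surjective f ∧
        HasProjDimLE R n (LinearMap.ker f) := Iff.rfl

/-- transfer along a linear equivalence -/
theorem hpdle_congr : ∀ (n : ℕ) {M N : Type v} [AddCommMonoid M] [Module R M]
    [AddCommMonoid N] [Module R N] (_ : M ≃ₗ[R] N),
    HasProjDimLE R n M → HasProjDimLE R n N
  | 0, M, N, _, _, _, _, e, h => letI : Module.Projective R M := h; Module.Projective.of_equiv e
  | n+1, M, N, _, _, _, _, e, h => by
    obtain ⟨P, _, _, f, hP, hf, hker⟩ := h
    refine ⟨P, _, _, e.toLinearMap.comp f, hP, e.surjective.comp hf, ?_⟩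
    have hk : LinearMap.ker (e.toLinearMap.comp f) = LinearMap.ker f := by
      ext x; simp
    refine hpdle_congr n (LinearEquiv.ofEq _ _ hk.symm) hker

theorem hpdle_of_projective {M : Type v} [AddCommMonoid M] [Module R M]
    (h : Module.Projective R M) : ∀ n, HasProjDimLE R n M
  | 0 => h
  | n+1 => by
    refine ⟨M, _, _, LinearMap.id, h, Function.surjective_id, ?_⟩
    have hs : Subsingleton (LinearMap.ker (LinearMap.id : M →ₗ[R] M)) := by
      constructor
      rintro ⟨a, ha⟩ ⟨b, hb⟩
      simp only [LinearMap.mem_ker, LinearMap.id_apply] at ha hb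
      subst ha; subst hb; rfl
    have hproj : Module.Projective R (LinearMap.ker (LinearMap.id : M →ₗ[R] M)) :=
      ⟨0, fun x => Subsingleton.elim _ _⟩
    exact hpdle_of_projective hproj n

theorem hpdle_succ {n : ℕ} {M : Type v} [AddCommMonoid M] [Module R M]
    (h : HasProjDimLE R n M) : HasProjDimLE R (n+1) M := by
  induction n generalizing M with
  | zero => exact hpdle_of_projective h 1
  | succ n ih =>
    obtain ⟨P, _, _, f, hP, hf, hker⟩ := h
    exact ⟨P, _, _, f, hP, hf, ih hker⟩

theorem hpdle_mono {n m : ℕ} (hnm : n ≤ m) {M : Type v} [AddCommMonoid M] [Module R M]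
    (h : HasProjDimLE R n M) : HasProjDimLE R m M := by
  induction hnm with
  | refl => exact h
  | step _ ih => exact hpdle_succ ih
end Generic
section Generic2
variable {R : Type u} [Ring R]

/-- If `f : X → Y` is a surjection onto a projective module, then `X ≃ ker f × Y`. -/
theorem equiv_prod_ker {X Y : Type v} [AddCommGroup X] [Module R X] [AddCommMonoid Y]
    [Module R Y] (f : X →ₗ[R] Y) (hf : Function.Surjective f)
    (hY : Module.Projective R Y) :
    Nonempty ((LinearMap.ker f × Y) ≃ₗ[R] X) := by
  letI : AddCommGroup Y := Module.addCommMonoidToAddCommGroup R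
  obtain ⟨s, hs⟩ := Module.projective_lifting_property f LinearMap.id hf
  have hsf : ∀ y, f (s y) = y := fun y => congrArg (fun g => g y) (congrArg DFunLike.coe hs)
  refine ⟨LinearEquiv.ofLinear ((LinearMap.ker f).subtype.coprod s)
    (LinearMap.prod (LinearMap.codRestrict (LinearMap.ker f) (LinearMap.id - s ∘ₗ f)
      (fun x => by simp [map_sub, hsf])) f) ?_ ?_⟩
  · apply LinearMap.ext; intro x
    simp [hsf]
  · apply LinearMap.ext; rintro ⟨⟨x, hx⟩, y⟩
    have hx0 : f x = 0 := LinearMap.mem_ker.mp hx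
    refine Prod.ext (Subtype.ext ?_) ?_ <;>
      simp [hx0, hsf, map_add]

/-- Schanuel's lemma. -/
theorem schanuel {M P P' : Type v} [AddCommMonoid M] [Module R M]
    [AddCommMonoid P] [Module R P] [AddCommMonoid P'] [Module R P']
    (f : P →ₗ[R] M) (f' : P' →ₗ[R] M) (hP : Module.Projective R P)
    (hP' : Module.Projective R P') (hf : Function.Surjective f)
    (hf' : Function.Surjective f') :
    Nonempty ((LinearMap.ker f × P') ≃ₗ[R] (LinearMap.ker f' × P)) := by
  letI : AddCommGroup M := Module.addCommMonoidToAddCommGroup R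
  letI : AddCommGroup P := Module.addCommMonoidToAddCommGroup R
  letI : AddCommGroup P' := Module.addCommMonoidToAddCommGroup R
  set g : P × P' →ₗ[R] M :=
    (f ∘ₗ LinearMap.fst R P P') - (f' ∘ₗ LinearMap.snd R P P') with hg
  have hmem : ∀ z : P × P', z ∈ LinearMap.ker g ↔ f z.1 = f' z.2 := by
    intro z; simp [hg, sub_eq_zero]
  set X := LinearMap.ker g
  set π : X →ₗ[R] P := (LinearMap.fst R P P') ∘ₗ X.subtype with hπ
  set π' : X →ₗ[R] P' := (LinearMap.snd R P P') ∘ₗ X.subtype with hπ'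
  have hπs : Function.Surjective π := by
    intro p
    obtain ⟨p', hp'⟩ := hf' (f p)
    exact ⟨⟨(p, p'), (hmem _).mpr hp'.symm⟩, rfl⟩
  have hπ's : Function.Surjective π' := by
    intro p'
    obtain ⟨p, hp⟩ := hf (f' p')
    exact ⟨⟨(p, p'), (hmem _).mpr hp⟩, rfl⟩
  have e1 : LinearMap.ker π ≃ₗ[R] LinearMap.ker f' :=
    { toFun := fun x => ⟨x.1.1.2, by
        have h1 : x.1.1.1 = 0 := x.2
        have h2 := (hmem x.1.1).mp x.1.2
        rw [h1, map_zero] at h2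
        exact LinearMap.mem_ker.mpr h2.symm⟩
      invFun := fun y => ⟨⟨(0, y.1), (hmem _).mpr (by
        simp [LinearMap.mem_ker.mp y.2])⟩, by
        simp [hπ, LinearMap.mem_ker]⟩
      map_add' := fun x y => by ext <;> simp [hπ]
      map_smul' := fun c x => by ext; simp
      left_inv := fun x => by
        have h1 : x.1.1.1 = 0 := x.2
        ext <;> simp [h1]
      right_inv := fun y => rfl }
  have e2 : LinearMap.ker π' ≃ₗ[R] LinearMap.ker f :=
    { toFun := fun x => ⟨x.1.1.1, by
        have h1 : x.1.1.2 = 0 := x.2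
        have h2 := (hmem x.1.1).mp x.1.2
        rw [h1, map_zero] at h2
        exact LinearMap.mem_ker.mpr h2⟩
      invFun := fun y => ⟨⟨(y.1, 0), (hmem _).mpr (by
        simp [LinearMap.mem_ker.mp y.2])⟩, by
        simp [hπ', LinearMap.mem_ker]⟩
      map_add' := fun x y => by ext <;> simp [hπ']
      map_smul' := fun c x => by ext; simp
      left_inv := fun x => by
        have h1 : x.1.1.2 = 0 := x.2
        ext <;> simp [h1]
      right_inv := fun y => rfl }
  obtain ⟨u⟩ := equiv_prod_ker π hπs hP
  obtain ⟨u'⟩ := equiv_prod_ker π' hπ's hP'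
  exact ⟨(LinearEquiv.prodCongr e2.symm (LinearEquiv.refl R P')).trans
    (u'.trans (u.symm.trans (LinearEquiv.prodCongr e1 (LinearEquiv.refl R P))))⟩

noncomputable def kerProdMapEquiv {A B C D : Type v} [AddCommMonoid A] [Module R A]
    [AddCommMonoid B] [Module R B] [AddCommMonoid C] [Module R C]
    [AddCommMonoid D] [Module R D] (f : A →ₗ[R] B) (g : C →ₗ[R] D) :
    LinearMap.ker (f.prodMap g) ≃ₗ[R] (LinearMap.ker f × LinearMap.ker g) where
  toFun x := (⟨x.1.1, LinearMap.mem_ker.mpr (congrArg Prod.fst (LinearMap.mem_ker.mp x.2))⟩,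
    ⟨x.1.2, LinearMap.mem_ker.mpr (congrArg Prod.snd (LinearMap.mem_ker.mp x.2))⟩)
  invFun y := ⟨(y.1.1, y.2.1), LinearMap.mem_ker.mpr (by
    have h1 := LinearMap.mem_ker.mp y.1.2
    have h2 := LinearMap.mem_ker.mp y.2.2
    exact Prod.ext h1 h2)⟩
  map_add' x y := by ext <;> rfl
  map_smul' c x := by ext <;> rfl
  left_inv x := rfl
  right_inv y := rfl

theorem hpdle_prod : ∀ (n : ℕ) {A B : Type v} [AddCommMonoid A] [Module R A]
    [AddCommMonoid B] [Module R B],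
    HasProjDimLE R n A → HasProjDimLE R n B → HasProjDimLE R n (A × B)
  | 0, A, B, _, _, _, _, hA, hB =>
    letI : Module.Projective R A := hA
    letI : Module.Projective R B := hB
    (inferInstance : Module.Projective R (A × B))
  | n+1, A, B, _, _, _, _, hA, hB => by
    obtain ⟨P, _, _, f, hP, hf, hkf⟩ := hA
    obtain ⟨Q, _, _, g, hQ, hg, hkg⟩ := hB
    refine ⟨P × Q, _, _, f.prodMap g, ?_, ?_, ?_⟩
    · letI := hP; letI := hQ; infer_instance
    · intro ⟨a, b⟩
      obtain ⟨p, hp⟩ := hf a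
      obtain ⟨q, hq⟩ := hg b
      exact ⟨(p, q), by simp [hp, hq]⟩
    · exact hpdle_congr n (kerProdMapEquiv f g).symm (hpdle_prod n hkf hkg)

/-- A direct factor has projective dimension at most that of the product. -/
theorem hpdle_of_prod : ∀ (n : ℕ) {A Q : Type v} [AddCommMonoid A] [Module R A]
    [AddCommMonoid Q] [Module R Q], Module.Projective R Q →
    HasProjDimLE R n (A × Q) → HasProjDimLE R n A
  | 0, A, Q, _, _, _, _, hQ, h =>
    letI : Module.Projective R (A × Q) := h
    Module.Projective.of_split (LinearMap.inl R A Q) (LinearMap.fst R A Q) (by ext; simp)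
  | n+1, A, Q, _, _, _, _, hQ, h => by
    obtain ⟨P, _, _, f, hP, hf, hkf⟩ := h
    letI : AddCommGroup P := Module.addCommMonoidToAddCommGroup R
    set f₁ : P →ₗ[R] A := (LinearMap.fst R A Q) ∘ₗ f with hf₁
    have hf₁s : Function.Surjective f₁ := by
      intro a
      obtain ⟨p, hp⟩ := hf (a, 0)
      exact ⟨p, by simp [hf₁, hp]⟩
    set q : LinearMap.ker f₁ →ₗ[R] Q :=
      (LinearMap.snd R A Q) ∘ₗ f ∘ₗ (LinearMap.ker f₁).subtype with hq
    have hqs : Function.Surjective q := by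
      intro y
      obtain ⟨p, hp⟩ := hf (0, y)
      refine ⟨⟨p, LinearMap.mem_ker.mpr (by simp [hf₁, hp])⟩, by simp [hq, hp]⟩
    have ekq : LinearMap.ker q ≃ₗ[R] LinearMap.ker f :=
      { toFun := fun x => ⟨x.1.1, LinearMap.mem_ker.mpr (by
          have h1 : f₁ x.1.1 = 0 := x.1.2
          have h2 : q x.1 = 0 := x.2
          simp only [hf₁, LinearMap.comp_apply] at h1
          simp only [hq, LinearMap.comp_apply, Submodule.subtype_apply] at h2
          exact Prod.ext h1 h2)⟩
        invFun := fun y => ⟨⟨y.1, LinearMap.mem_ker.mpr (by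
            simp [hf₁, LinearMap.mem_ker.mp y.2])⟩,
          LinearMap.mem_ker.mpr (by simp [hq, LinearMap.mem_ker.mp y.2])⟩
        map_add' := fun x y => rfl
        map_smul' := fun c x => rfl
        left_inv := fun x => rfl
        right_inv := fun y => rfl }
    obtain ⟨u⟩ := equiv_prod_ker q hqs hQ
    refine ⟨P, _, _, f₁, hP, hf₁s, ?_⟩
    exact hpdle_congr n u (hpdle_prod n (hpdle_congr n ekq.symm hkf) (hpdle_of_projective hQ n))

/-- Any syzygy works: if `projdim M ≤ n+1` then the kernel of any projective cover
has `projdim ≤ n`. -/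
theorem hpdle_ker : ∀ (n : ℕ) {M P : Type v} [AddCommMonoid M] [Module R M]
    [AddCommMonoid P] [Module R P] (f : P →ₗ[R] M), Module.Projective R P →
    Function.Surjective f → HasProjDimLE R (n+1) M → HasProjDimLE R n (LinearMap.ker f)
  | n, M, P, _, _, _, _, f, hP, hf, h => by
    obtain ⟨P', _, _, f', hP', hf', hkf'⟩ := h
    obtain ⟨e⟩ := schanuel f f' hP hP' hf hf'
    exact hpdle_of_prod n hP' (hpdle_congr n e.symm (hpdle_prod n hkf' (hpdle_of_projective hP n)))

section Grp
variable (k : Type u) [CommRing k] (G : Type u) [Group G]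

local notation "R" => MonoidAlgebra k G

/-- The `k`-module structure on an `R = kG`-module by restriction of scalars. -/
noncomputable def kMod (M : Type u) [AddCommMonoid M] [Module R M] : Module k M :=
  Module.compHom M (algebraMap k R)

theorem kTower (M : Type u) [AddCommMonoid M] [Module R M] :
    letI := kMod k G M
    IsScalarTower k R M := by
  letI := kMod k G M
  constructor
  intro a b m
  show (a • b : R) • m = algebraMap k R a • (b • m)
  rw [Algebra.smul_def a b, mul_smul]

instance : Module.Free k (MonoidAlgebra k G) := inferInstance

example (M : Type u) [AddCommMonoid M] [Module R M] : Module.Free k (M →₀ R) := inferInstance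

noncomputable example (M N : Type u) [AddCommMonoid M] [Module R M] [AddCommMonoid N] [Module R N]
    (f : M →ₗ[R] N) :
    letI := kMod k G M
    letI := kMod k G N
    M →ₗ[k] N := by
  letI := kMod k G M
  letI := kMod k G N
  letI := kTower k G M
  letI := kTower k G N
  exact f.restrictScalars k

end Grp

section Grp2
variable (k : Type u) [CommRing k] (G : Type u) [Group G]
local notation "R" => MonoidAlgebra k G

/-- Restriction of scalars of a projective `kG`-module is `k`-projective. -/
theorem proj_restrict (M : Type u) [AddCommMonoid M] [Module R M]
    (hM : Module.Projective R M) :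
    letI := kMod k G M
    Module.Projective k M := by
  letI := kMod k G M
  letI := kTower k G M
  obtain ⟨s, hs⟩ := Module.projective_def.mp hM
  refine Module.Projective.of_split (M := M →₀ R)
    (s.restrictScalars k) ((Finsupp.linearCombination R id).restrictScalars k) ?_
  ext x
  exact hs x
end Grp2

section Avg
variable (k : Type u) [CommRing k] (G : Type u) [Group G]
local notation "R" => MonoidAlgebra k G

theorem avg_key [Fintype G] (b : MonoidAlgebra k G) :
    ∑ g : G, (MonoidAlgebra.single g⁻¹ (1:k)) *
      MonoidAlgebra.single (1:G) ((MonoidAlgebra.single g (1:k) * b).coeff 1) = b := by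
  have h1 : ∀ g : G, (MonoidAlgebra.single g (1:k) * b).coeff 1 = b.coeff g⁻¹ := by
    intro g; rw [MonoidAlgebra.coeff_single_mul_apply]; simp
  simp_rw [h1, MonoidAlgebra.single_mul_single, mul_one, one_mul]
  have hre := Fintype.sum_equiv (Equiv.inv G) (fun x : G => MonoidAlgebra.single x⁻¹ (b.coeff x⁻¹))
    (fun h => MonoidAlgebra.single h (b.coeff h)) (fun x => rfl)
  rw [hre]
  ext h
  rw [MonoidAlgebra.coeff_sum, Finset.sum_apply']
  classical
  simp [MonoidAlgebra.coeff_single, Finsupp.single_apply]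
end Avg

section Relinj
variable (k : Type u) [CommRing k] (G : Type u) [Group G] [Finite G]
local notation "R" => MonoidAlgebra k G

theorem relinj (N P : Type u) [AddCommMonoid N] [Module R N] [AddCommMonoid P] [Module R P]
    (hN : Module.Projective R N) (i : N →ₗ[R] P) (t : P → N)
    (tadd : ∀ x y, t (x + y) = t x + t y)
    (tsmul : ∀ (a : k) (x : P), t ((algebraMap k R a) • x) = (algebraMap k R a) • t x)
    (hti : ∀ x, t (i x) = x) :
    ∃ r : P →ₗ[R] N, ∀ x, r (i x) = x := by
  cases nonempty_fintype G
  obtain ⟨σ, hσ⟩ := Module.projective_def.mp hN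
  classical
  set c : (N →₀ R) → (N →₀ R) :=
    Finsupp.mapRange (fun x => MonoidAlgebra.single 1 (x.coeff 1)) (by simp) with hc
  have hc_apply : ∀ (v : N →₀ R) (n : N), c v n = MonoidAlgebra.single 1 ((v n).coeff 1) := by
    intro v n; simp [hc]
  have hc_add : ∀ v w, c (v + w) = c v + c w := by
    intro v w; ext n : 1
    rw [Finsupp.add_apply, hc_apply, hc_apply, hc_apply, ← MonoidAlgebra.single_add,
      Finsupp.add_apply, MonoidAlgebra.coeff_add, Finsupp.add_apply]
  have hc_alg : ∀ (a : k) (v : N →₀ R),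
      c ((algebraMap k R a) • v) = (algebraMap k R a) • c v := by
    intro a v; ext n : 1
    rw [Finsupp.smul_apply, hc_apply, Finsupp.smul_apply, hc_apply]
    have h2 : ((algebraMap k R a) • (v n)).coeff 1 = a * (v n).coeff 1 := by
      rw [smul_eq_mul, MonoidAlgebra.coe_algebraMap]
      simp [MonoidAlgebra.coeff_single_mul_apply]
    rw [h2, smul_eq_mul, MonoidAlgebra.coe_algebraMap]
    simp [MonoidAlgebra.single_mul_single]
  have hkey : ∀ v : N →₀ R,
      ∑ g : G, (MonoidAlgebra.single g⁻¹ (1:k) : R) •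
        c ((MonoidAlgebra.single g (1:k) : R) • v) = v := by
    intro v; ext n : 1
    rw [Finset.sum_apply']
    have : ∀ g : G, ((MonoidAlgebra.single g⁻¹ (1:k) : R) •
        c ((MonoidAlgebra.single g (1:k) : R) • v)) n =
        (MonoidAlgebra.single g⁻¹ (1:k)) *
          MonoidAlgebra.single (1:G) ((MonoidAlgebra.single g (1:k) * v n).coeff 1) := by
      intro g
      rw [Finsupp.smul_apply, hc_apply, Finsupp.smul_apply]
      rfl
    simp_rw [this]
    rw [avg_key]
  set τ : (N →₀ R) →ₗ[R] N := Finsupp.linearCombination R id with hτ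
  set F : P → (N →₀ R) := fun e => ∑ g : G, (MonoidAlgebra.single g⁻¹ (1:k) : R) •
      c (σ (t ((MonoidAlgebra.single g (1:k) : R) • e))) with hF
  have hF_add : ∀ e e', F (e + e') = F e + F e' := by
    intro e e'
    rw [hF]
    simp only [smul_add, tadd, map_add, hc_add, ← Finset.sum_add_distrib]
  have hF_of : ∀ (g' : G) (e : P),
      F ((MonoidAlgebra.single g' (1:k) : R) • e) = (MonoidAlgebra.single g' (1:k) : R) • F e := by
    intro g' e
    rw [hF]
    have step : ∀ g : G, (MonoidAlgebra.single g (1:k) : R) •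
        ((MonoidAlgebra.single g' (1:k) : R) • e) =
        (MonoidAlgebra.single (g * g') (1:k) : R) • e := by
      intro g
      rw [← mul_smul, MonoidAlgebra.single_mul_single, one_mul]
    simp_rw [step]
    rw [Finset.smul_sum]
    refine Fintype.sum_equiv (Equiv.mulRight g') _ _ ?_
    intro g
    simp only [Equiv.coe_mulRight]
    rw [← mul_smul, MonoidAlgebra.single_mul_single, one_mul]
    congr 2
    rw [mul_inv_rev, mul_inv_cancel_left]
  have hF_alg : ∀ (a : k) (e : P), F ((algebraMap k R a) • e) = (algebraMap k R a) • F e := by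
    intro a e
    rw [hF, Finset.smul_sum]
    refine Finset.sum_congr rfl ?_
    intro g _
    have comm : (MonoidAlgebra.single g (1:k) : R) • ((algebraMap k R a) • e) =
        (algebraMap k R a) • ((MonoidAlgebra.single g (1:k) : R) • e) := by
      rw [← mul_smul, ← mul_smul]
      exact congrArg (· • e) (Algebra.commutes a _).symm
    rw [comm, tsmul, map_smul, hc_alg, ← mul_smul, ← mul_smul,
      Algebra.commutes a (MonoidAlgebra.single g⁻¹ (1:k) : R)]
  have hr_smul : ∀ (a : R) (e : P), τ (F (a • e)) = a • τ (F e) := by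
    intro a e
    induction a using MonoidAlgebra.induction_on with
    | of g =>
        have : MonoidAlgebra.of k G g = (MonoidAlgebra.single g (1:k) : R) := rfl
        rw [this, hF_of, map_smul]
    | add a b ha hb =>
        rw [add_smul, hF_add, map_add, ha, hb, add_smul]
    | smul u a ha =>
        have h1 : (u • a) • e = (algebraMap k R u) • (a • e) := by
          rw [← mul_smul, Algebra.smul_def]
        rw [h1, hF_alg, map_smul, ha, ← mul_smul, ← Algebra.smul_def]
  refine ⟨{ toFun := fun e => τ (F e)
            map_add' := fun e e' => by
              show τ (F (e + e')) = τ (F e) + τ (F e')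
              rw [hF_add, map_add]
            map_smul' := fun a e => by
              show τ (F (a • e)) = a • τ (F e)
              exact hr_smul a e }, ?_⟩
  intro n
  show τ (F (i n)) = n
  have : F (i n) = σ n := by
    rw [hF]
    have step : ∀ g : G, c (σ (t ((MonoidAlgebra.single g (1:k) : R) • i n))) =
        c ((MonoidAlgebra.single g (1:k) : R) • σ n) := by
      intro g
      rw [← map_smul i, hti, map_smul]
    simp_rw [step]
    exact hkey (σ n)
  rw [this]
  exact hσ n
end Relinj

section L2
variable (k : Type u) [CommRing k] (G : Type u) [Group G] [Finite G]
local notation "R" => MonoidAlgebra k G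

theorem proj_of_kproj_findim : ∀ (m : ℕ) (M : Type u) [AddCommMonoid M] [Module R M],
    (letI := kMod k G M; Module.Projective k M) → HasProjDimLE R m M →
    Module.Projective R M
  | 0, M, _, _, _, h => h
  | m+1, M, _, _, hkM, h => by
    obtain ⟨P, _, _, f, hP, hf, hker⟩ := h
    letI : AddCommGroup P := Module.addCommMonoidToAddCommGroup R
    letI : AddCommGroup M := Module.addCommMonoidToAddCommGroup R
    letI := kMod k G M
    letI := kMod k G P
    letI := kMod k G (LinearMap.ker f)
    letI := kTower k G M
    letI := kTower k G P
    letI := kTower k G (LinearMap.ker f)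
    letI : Module.Projective k M := hkM
    have hkP : Module.Projective k P := proj_restrict k G P hP
    obtain ⟨s, hs⟩ := Module.projective_lifting_property (f.restrictScalars k)
      (LinearMap.id (M := M)) hf
    have hsf : ∀ y, f (s y) = y := fun y => congrArg (fun g => g y) (congrArg DFunLike.coe hs)
    have hsalg : ∀ (a : k) (m : M), s ((algebraMap k R a) • m) = (algebraMap k R a) • s m := by
      intro a m
      have := s.map_smul a m
      exact this
    -- the k-linear retraction onto the kernel
    have tmem : ∀ p : P, p - s (f p) ∈ LinearMap.ker f := by
      intro p; rw [LinearMap.mem_ker, map_sub, hsf, sub_self]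
    set t : P → LinearMap.ker f := fun p => ⟨p - s (f p), tmem p⟩ with ht
    have tadd : ∀ x y, t (x + y) = t x + t y := by
      intro x y; apply Subtype.ext
      show (x + y) - s (f (x + y)) = (x - s (f x)) + (y - s (f y))
      rw [map_add, map_add]
      abel
    have tsmul : ∀ (a : k) (x : P), t ((algebraMap k R a) • x) = (algebraMap k R a) • t x := by
      intro a x; apply Subtype.ext
      show (algebraMap k R a) • x - s (f ((algebraMap k R a) • x)) = (algebraMap k R a) • (x - s (f x))
      rw [map_smul, hsalg, smul_sub]
    have hti : ∀ x : LinearMap.ker f, t ((LinearMap.ker f).subtype x) = x := by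
      intro x; apply Subtype.ext
      show x.1 - s (f x.1) = x.1
      rw [LinearMap.mem_ker.mp x.2, map_zero, sub_zero]
    -- the kernel is k-projective
    have hkker : Module.Projective k (LinearMap.ker f) := by
      refine Module.Projective.of_split (M := P)
        (((LinearMap.ker f).subtype).restrictScalars k)
        ({ toFun := t
           map_add' := tadd
           map_smul' := fun a x => by
             show t (a • x) = a • t x
             have h1 : a • x = (algebraMap k R a) • x := rfl
             have h2 : a • t x = (algebraMap k R a) • t x := rfl
             rw [h1, h2, tsmul] }) ?_
      apply LinearMap.ext; intro x
      exact hti x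
    -- the kernel is kG-projective by induction
    have hproj : Module.Projective R (LinearMap.ker f) :=
      proj_of_kproj_findim m (LinearMap.ker f) hkker hker
    -- average the retraction
    obtain ⟨r, hr⟩ := relinj k G (LinearMap.ker f) P hproj ((LinearMap.ker f).subtype)
      t tadd tsmul hti
    -- P ≃ ker f × M
    letI : AddCommGroup (LinearMap.ker f) := Module.addCommMonoidToAddCommGroup R
    set φ : P →ₗ[R] (LinearMap.ker f × M) := r.prod f with hφ
    have hφinj : Function.Injective φ := by
      intro p q hpq
      have h1 : r p = r q := congrArg Prod.fst hpq
      have h2 : f p = f q := congrArg Prod.snd hpq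
      have hmem : p - q ∈ LinearMap.ker f := by
        rw [LinearMap.mem_ker, map_sub, h2, sub_self]
      have h3 : r (p - q) = 0 := by rw [map_sub, h1, sub_self]
      have h4 := hr ⟨p - q, hmem⟩
      rw [show (LinearMap.ker f).subtype ⟨p - q, hmem⟩ = p - q from rfl, h3] at h4
      have h5 : p - q = 0 := congrArg Subtype.val h4.symm
      exact sub_eq_zero.mp h5
    have hφsurj : Function.Surjective φ := by
      rintro ⟨y, m⟩
      obtain ⟨p, hp⟩ := hf m
      refine ⟨p + (LinearMap.ker f).subtype (y - r p), ?_⟩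
      apply Prod.ext
      · show r (p + (LinearMap.ker f).subtype (y - r p)) = y
        rw [map_add, hr]
        exact add_sub_cancel (r p) y
      · show f (p + (LinearMap.ker f).subtype (y - r p)) = m
        rw [map_add]
        have : f ((LinearMap.ker f).subtype (y - r p)) = 0 := (y - r p).2
        rw [this, add_zero, hp]
    set e : P ≃ₗ[R] (LinearMap.ker f × M) := LinearEquiv.ofBijective φ ⟨hφinj, hφsurj⟩
    letI : Module.Projective R P := hP
    refine Module.Projective.of_split (M := P)
      (e.symm.toLinearMap ∘ₗ LinearMap.inr R (LinearMap.ker f) M)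
      ((LinearMap.snd R (LinearMap.ker f) M) ∘ₗ e.toLinearMap) ?_
    apply LinearMap.ext; intro m
    simp
end L2


section Cut
variable (k : Type u) [CommRing k] (G : Type u) [Group G] [Finite G]
local notation "R" => MonoidAlgebra k G

theorem hpdle_cut : ∀ (j m : ℕ) (M : Type u) [AddCommMonoid M] [Module R M],
    HasProjDimLE R (j + m) M →
    (@HasProjDimLE k _ j M _ (kMod k G M)) → HasProjDimLE R j M
  | 0, m, M, _, _, h, hkM => by
    rw [Nat.zero_add] at h
    exact proj_of_kproj_findim k G m M hkM h
  | j+1, m, M, _, _, h, hkM => by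
    rw [show j + 1 + m = (j + m) + 1 by omega] at h
    obtain ⟨P, _, _, f, hP, hf, hker⟩ := h
    letI := kMod k G M
    letI := kMod k G P
    letI := kMod k G (LinearMap.ker f)
    letI := kTower k G M
    letI := kTower k G P
    letI := kTower k G (LinearMap.ker f)
    have hkP : Module.Projective k P := proj_restrict k G P hP
    have hkker' : HasProjDimLE k j (LinearMap.ker (f.restrictScalars k)) :=
      hpdle_ker j (f.restrictScalars k) hkP hf hkM
    have eker : (LinearMap.ker (f.restrictScalars k)) ≃ₗ[k] (LinearMap.ker f) :=
      { toFun := fun x => ⟨x.1, x.2⟩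
        invFun := fun x => ⟨x.1, x.2⟩
        map_add' := fun x y => rfl
        map_smul' := fun a x => rfl
        left_inv := fun x => rfl
        right_inv := fun x => rfl }
    have hkker : @HasProjDimLE k _ j (LinearMap.ker f) _ (kMod k G (LinearMap.ker f)) :=
      hpdle_congr j eker hkker'
    exact ⟨P, _, _, f, hP, hf, hpdle_cut j m (LinearMap.ker f) hker hkker⟩
end Cut

/-- Let `k` be a commutative noetherian ring of finite global dimension `d`, and
let `G` be a finite group. If a `kG`-module `M` (possibly infinitely generated) has finite
projective dimension over `kG`, then its projective dimension over `kG` is at most `d`. -/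
theorem finite_group_projdim_le_global_dim
    (k : Type u) [CommRing k] [IsNoetherianRing k] (d : ℕ) (hk : GlobalDimLE k d)
    (G : Type u) [Group G] [Finite G]
    (M : Type u) [AddCommGroup M] [Module (MonoidAlgebra k G) M]
    (hM : HasFinProjDim (MonoidAlgebra k G) M) :
    HasProjDimLE (MonoidAlgebra k G) d M := by
  obtain ⟨n, hn⟩ := hM
  have h1 : HasProjDimLE (MonoidAlgebra k G) (d + n) M := hpdle_mono (Nat.le_add_left n d) hn
  have hkM : @HasProjDimLE k _ d M _ (kMod k G M) := hk M inferInstance (kMod k G M)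
  exact hpdle_cut k G d n M h1 hkM
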